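/- Let (x₁, x₂) be a centered bivariate Gaussian with unit variances and correlation ρ ∈ (-1, 1). Then E[max(x₁,0)·max(x₂,0)] = (1/(2π))·(ρ·arcsin(ρ) + √(1-ρ²)) + ρ/4. -/

import Mathlib

open MeasureTheory Real

/-- Density of the centered bivariate Gaussian with unit variances and
correlation ρ. -/
noncomputable def biPdfStd (ρ : ℝ) (x y : ℝ) : ℝ :=
  (2 * Real.pi * Real.sqrt (1 - ρ^2))⁻¹ *
    Real.exp (-(1 / (2 * (1 - ρ^2))) * (x^2 - 2 * ρ * x * y + y^2))

/-! Writing `x₂ = ρ x₁ + √(1 - ρ²) z` turns the density into that of the standard Gaussian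
`(x₁, z)`, at the cost of the Jacobian `√(1 - ρ²)` of this shear. The new integrand is
homogeneous of degree two, so in polar coordinates it splits into the radial factor
`∫₀^∞ r³ e^{-r²/2} dr = 2` and an angular integral. With `ρ = sin α` the second ReLU becomes
`max (sin (θ + α)) 0`, so the angular integrand is `cos θ sin (θ + α)` on `(-α, π/2)` and
vanishes elsewhere on `(-π, π)`. -/

open Set

theorem integral_comp_shear {E : Type*} [NormedAddCommGroup E] [NormedSpace ℝ E]
    (a : ℝ) {b : ℝ} (hb : b ≠ 0) (g : ℝ × ℝ → E) :
    ∫ p, g p = |b| • ∫ q : ℝ × ℝ, g (q.1, a * q.1 + b * q.2) := by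
  set L : ℝ × ℝ →L[ℝ] ℝ × ℝ := LinearMap.toContinuousLinearMap
    (Matrix.toLin (Module.Basis.finTwoProd ℝ) (Module.Basis.finTwoProd ℝ) !![1, 0; a, b])
  have hL : ∀ q : ℝ × ℝ, L q = (q.1, a * q.1 + b * q.2) := fun q => by
    simp [L, Matrix.toLin_finTwoProd_toContinuousLinearMap]
  have hdet : L.det = b := by
    simp [L, LinearMap.det_toContinuousLinearMap, LinearMap.det_toLin, Matrix.det_fin_two_of]
  have hsurj : Function.Surjective L := fun p =>
    ⟨(p.1, (p.2 - a * p.1) / b), by rw [hL]; field_simp; ring_nf⟩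
  have hinj : Function.Injective L :=
    (LinearMap.equivOfDetNeZero (L : ℝ × ℝ →ₗ[ℝ] ℝ × ℝ)
      (by change L.det ≠ 0; rwa [hdet])).injective
  have h := integral_image_eq_integral_abs_det_fderiv_smul volume MeasurableSet.univ
    (fun x _ => L.hasFDerivAt.hasFDerivWithinAt) hinj.injOn g
  rw [image_univ, hsurj.range_eq, setIntegral_univ, setIntegral_univ] at h
  simp_rw [h, hdet, hL, integral_smul]

theorem integral_Ioi_pow_three_mul_exp_neg_sq_div_two :
    ∫ r in Ioi (0 : ℝ), r ^ 3 * exp (-r ^ 2 / 2) = 2 := by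
  have h := integral_rpow_mul_exp_neg_mul_rpow (p := 2) (q := 3) (b := 1 / 2)
    two_pos (by norm_num) (by norm_num)
  norm_num at h
  convert h using 5
  ring

theorem sqrt_one_sub_sq_mul_biPdfStd {ρ : ℝ} (hρ : ρ ∈ Ioo (-1 : ℝ) 1) (u v : ℝ) :
    √(1 - ρ ^ 2) * biPdfStd ρ u (ρ * u + √(1 - ρ ^ 2) * v) =
      (2 * π)⁻¹ * exp (-(u ^ 2 + v ^ 2) / 2) := by
  have h1 : 0 < 1 - ρ ^ 2 := by nlinarith [hρ.1, hρ.2]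
  have hs : √(1 - ρ ^ 2) ^ 2 = 1 - ρ ^ 2 := sq_sqrt h1.le
  have hexp : -(1 / (2 * (1 - ρ ^ 2))) *
      (u ^ 2 - 2 * ρ * u * (ρ * u + √(1 - ρ ^ 2) * v) + (ρ * u + √(1 - ρ ^ 2) * v) ^ 2) =
        -(u ^ 2 + v ^ 2) / 2 := by
    field_simp
    linear_combination -v ^ 2 * hs
  rw [biPdfStd, hexp]
  field_simp [(sqrt_pos.2 h1).ne']

theorem integral_mul_biPdfStd {ρ : ℝ} (hρ : ρ ∈ Ioo (-1 : ℝ) 1) (f : ℝ × ℝ → ℝ) :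
    ∫ p : ℝ × ℝ, f p * biPdfStd ρ p.1 p.2 =
      (2 * π)⁻¹ * ∫ q : ℝ × ℝ, f (q.1, ρ * q.1 + √(1 - ρ ^ 2) * q.2) *
        exp (-(q.1 ^ 2 + q.2 ^ 2) / 2) := by
  have hs : 0 < √(1 - ρ ^ 2) := sqrt_pos.2 (by nlinarith [hρ.1, hρ.2])
  rw [integral_comp_shear ρ hs.ne', abs_of_pos hs, smul_eq_mul, ← integral_const_mul,
    ← integral_const_mul]
  congr 1 with q
  rw [mul_left_comm, sqrt_one_sub_sq_mul_biPdfStd hρ]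
  ring

theorem max_mul_zero_of_nonneg {r : ℝ} (hr : 0 ≤ r) (x : ℝ) : max (r * x) 0 = r * max x 0 := by
  rw [mul_max_of_nonneg _ _ hr, mul_zero]

theorem integral_mul_exp_neg_sq_of_homogeneous (g : ℝ × ℝ → ℝ)
    (hg : ∀ r : ℝ, 0 < r → ∀ x y : ℝ, g (r * x, r * y) = r ^ 2 * g (x, y)) :
    ∫ q : ℝ × ℝ, g q * exp (-(q.1 ^ 2 + q.2 ^ 2) / 2) =
      2 * ∫ θ in Ioo (-π) π, g (cos θ, sin θ) := by
  rw [← integral_comp_polarCoord_symm]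
  have hpolar : ∀ p ∈ polarCoord.target,
      p.1 • (g (polarCoord.symm p) *
        exp (-((polarCoord.symm p).1 ^ 2 + (polarCoord.symm p).2 ^ 2) / 2)) =
      p.1 ^ 3 * exp (-p.1 ^ 2 / 2) * g (cos p.2, sin p.2) := by
    rintro ⟨r, θ⟩ ⟨hr, -⟩
    have hr : 0 < r := hr
    simp only [polarCoord_symm_apply, smul_eq_mul, hg r hr]
    have : (r * cos θ) ^ 2 + (r * sin θ) ^ 2 = r ^ 2 := by
      linear_combination r ^ 2 * cos_sq_add_sin_sq θ
    rw [this]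
    ring
  rw [setIntegral_congr_fun polarCoord.open_target.measurableSet hpolar,
    polarCoord_target, Measure.volume_eq_prod, ← Measure.prod_restrict,
    integral_prod_mul (fun r : ℝ => r ^ 3 * exp (-r ^ 2 / 2)) (fun θ => g (cos θ, sin θ)),
    integral_Ioi_pow_three_mul_exp_neg_sq_div_two]

theorem relu_cos_mul_relu_sin_add_eq_indicator {α θ : ℝ} (hα : α ∈ Icc (-(π / 2)) (π / 2))
    (hθ : θ ∈ Ioo (-π) π) :
    max (cos θ) 0 * max (sin (θ + α)) 0 =
      (Ioo (-α) (π / 2)).indicator (fun t => cos t * sin (t + α)) θ := by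
  obtain ⟨hα₁, hα₂⟩ := hα
  obtain ⟨hθ₁, hθ₂⟩ := hθ
  by_cases hmem : θ ∈ Ioo (-α) (π / 2)
  · rw [indicator_of_mem hmem]
    obtain ⟨h₁, h₂⟩ := hmem
    have hcos : 0 < cos θ := cos_pos_of_mem_Ioo ⟨by linarith, h₂⟩
    have hsin : 0 < sin (θ + α) := sin_pos_of_pos_of_lt_pi (by linarith) (by linarith)
    rw [max_eq_left hcos.le, max_eq_left hsin.le]
  · rw [indicator_of_notMem hmem]
    rcases le_or_gt (π / 2) θ with h | h
    · rw [max_eq_right (cos_nonpos_of_pi_div_two_le_of_le h (by linarith)), zero_mul]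
    rcases le_or_gt θ (-(π / 2)) with h' | h'
    · rw [← cos_neg, max_eq_right (cos_nonpos_of_pi_div_two_le_of_le (by linarith) (by linarith)),
        zero_mul]
    have : θ ≤ -α := by
      by_contra!
      exact hmem ⟨this, h⟩
    rw [max_eq_right (sin_nonpos_of_nonpos_of_neg_pi_le (by linarith) (by linarith)), mul_zero]

theorem integral_cos_mul_sin_add (α : ℝ) :
    ∫ θ in (-α)..(π / 2), cos θ * sin (θ + α) = ((π / 2 + α) * sin α + cos α) / 2 := by
  have hderiv : ∀ θ ∈ uIcc (-α) (π / 2),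
      HasDerivAt (fun t => t * sin α / 2 - cos (2 * t + α) / 4) (cos θ * sin (θ + α)) θ := by
    intro θ _
    refine ((((hasDerivAt_id θ).mul_const (sin α)).div_const 2).sub
      ((((hasDerivAt_id θ).const_mul 2).add_const α).cos.div_const 4)).congr_deriv ?_
    have h₁ : sin (2 * θ + α) = sin θ * cos (θ + α) + cos θ * sin (θ + α) := by
      rw [← sin_add]; ring_nf
    have h₂ : sin α = sin (θ + α) * cos θ - cos (θ + α) * sin θ := by
      rw [← sin_sub]; ring_nf
    simp only [id]
    linear_combination (h₁ + h₂) / 2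
  have hcont : Continuous fun θ => cos θ * sin (θ + α) := by fun_prop
  rw [intervalIntegral.integral_eq_sub_of_hasDerivAt hderiv (hcont.intervalIntegrable _ _),
    show 2 * (π / 2) + α = α + π by ring, show 2 * -α + α = -α by ring, cos_add_pi, cos_neg]
  ring

theorem integral_relu_cos_mul_relu_sin_add {α : ℝ} (hα : α ∈ Icc (-(π / 2)) (π / 2)) :
    ∫ θ in Ioo (-π) π, max (cos θ) 0 * max (sin (θ + α)) 0 =
      ((π / 2 + α) * sin α + cos α) / 2 := by
  have hsub : Ioo (-α) (π / 2) ⊆ Ioo (-π) π :=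
    Ioo_subset_Ioo (by linarith [hα.2, pi_pos]) (by linarith [pi_pos])
  rw [setIntegral_congr_fun measurableSet_Ioo fun θ hθ =>
      relu_cos_mul_relu_sin_add_eq_indicator hα hθ,
    setIntegral_indicator measurableSet_Ioo, inter_eq_self_of_subset_right hsub,
    ← integral_Ioc_eq_integral_Ioo,
    ← intervalIntegral.integral_of_le (by linarith [hα.1, pi_pos]), integral_cos_mul_sin_add]

theorem relu_product_moment_std (ρ : ℝ) (hρ : ρ ∈ Set.Ioo (-1 : ℝ) 1) :
    ∫ p : ℝ × ℝ, max p.1 0 * max p.2 0 * biPdfStd ρ p.1 p.2 =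
      (1 / (2 * Real.pi)) * (ρ * Real.arcsin ρ + Real.sqrt (1 - ρ^2)) + ρ / 4 := by
  set α := arcsin ρ
  have hα : α ∈ Icc (-(π / 2)) (π / 2) := ⟨neg_pi_div_two_le_arcsin ρ, arcsin_le_pi_div_two ρ⟩
  have hsin : sin α = ρ := sin_arcsin hρ.1.le hρ.2.le
  have hcos : cos α = √(1 - ρ ^ 2) := cos_arcsin ρ
  have hhom : ∀ r : ℝ, 0 < r → ∀ x y : ℝ,
      max (r * x) 0 * max (ρ * (r * x) + √(1 - ρ ^ 2) * (r * y)) 0 =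
        r ^ 2 * (max x 0 * max (ρ * x + √(1 - ρ ^ 2) * y) 0) := fun r hr x y => by
    rw [show ρ * (r * x) + √(1 - ρ ^ 2) * (r * y) = r * (ρ * x + √(1 - ρ ^ 2) * y) by ring,
      max_mul_zero_of_nonneg hr.le, max_mul_zero_of_nonneg hr.le]
    ring
  have hangle : ∀ θ, ρ * cos θ + √(1 - ρ ^ 2) * sin θ = sin (θ + α) := fun θ => by
    rw [sin_add, hsin, hcos]; ring
  rw [integral_mul_biPdfStd hρ (fun p => max p.1 0 * max p.2 0),
    integral_mul_exp_neg_sq_of_homogeneous _ hhom]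
  simp only [hangle]
  rw [integral_relu_cos_mul_relu_sin_add hα, hsin, hcos]
  field_simp
  ring
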